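/- arXiv:1311.6450 — 2 statements merged into one kernel-verified Lean document; each statement's English description precedes it below -/
import Mathlib

section
/- Closed convex cone duality characterization: for a concave, differentiable, positively 1-homogeneous function F on an open convex cone Γ ⊆ 𝕊^d with closure Γ̄, the closure satisfies Γ̄ = {γ ∈ 𝕊^d : ∇F(α)·γ ≥ 0 for all α ∈ Γ}, provided F > 0 on Γ and F = 0 on ∂Γ. -/
/-!
For `γ ∈ Γ̄` and `α ∈ Γ`, concavity and homogeneity make `F` superadditive, so the tangent
inequality gives `∇F(α)·γ ≥ F(γ) ≥ 0`. Conversely, if `∇F ·γ ≥ 0` on `Γ`, then along the ray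
`α + tγ` the restriction of `F` is concave with nonnegative derivative while the ray stays in `Γ`,
hence `F(α + tγ) ≥ F(α) > 0` there. Since `F` vanishes on `∂Γ`, the ray can never leave `Γ`, and
`γ = lim_{ε→0⁺} ε (α + ε⁻¹ γ)` lies in `Γ̄`.
-/

open Set Filter Topology

section ConcaveLine

variable {E : Type*} [AddCommGroup E] [Module ℝ E] {C : Set E} {F : E → ℝ} {x v : E}
  {s d : ℝ}

lemma ConcaveOn.concaveOn_line (hF : ConcaveOn ℝ C F) (x v : E) :
    ConcaveOn ℝ {t : ℝ | x + t • v ∈ C} (fun t => F (x + t • v)) := by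
  have h := hF.comp_affineMap (AffineMap.lineMap x (x + v))
  have hline : ∀ t : ℝ, AffineMap.lineMap x (x + v) t = x + t • v := fun t => by
    rw [AffineMap.lineMap_apply_module', add_sub_cancel_left, add_comm]
  simp only [Set.preimage, hline] at h
  exact h.congr fun t _ => by simp [hline]

lemma ConcaveOn.map_add_smul_sub_le_of_hasDerivAt (hF : ConcaveOn ℝ C F) (hs : 0 < s)
    (hx : x ∈ C) (hxv : x + s • v ∈ C) (hd : HasDerivAt (fun t : ℝ => F (x + t • v)) d 0) :
    F (x + s • v) - F x ≤ s * d := by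
  have h := (hF.concaveOn_line x v).slope_le_of_hasDerivAt (x := 0) (y := s)
    (by simpa using hx) hxv hs hd
  rw [slope_def_field, div_le_iff₀ (by simpa using hs)] at h
  simpa [mul_comm] using h

lemma ConcaveOn.le_map_sub_map_sub_smul_of_hasDerivAt (hF : ConcaveOn ℝ C F)
    (hs : 0 < s) (hx : x ∈ C) (hxv : x - s • v ∈ C)
    (hd : HasDerivAt (fun t : ℝ => F (x + t • v)) d 0) :
    s * d ≤ F x - F (x - s • v) := by
  have h := (hF.concaveOn_line x v).le_slope_of_hasDerivAt (x := -s) (y := 0)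
    (by simpa [sub_eq_add_neg] using hxv) (by simpa using hx) (by linarith) hd
  rw [slope_def_field, le_div_iff₀ (by simpa using hs)] at h
  simpa [mul_comm, sub_eq_add_neg] using h

lemma Convex.add_mem_of_smul_mem (hC : Convex ℝ C) (hcone : ∀ t : ℝ, 0 < t → ∀ x ∈ C, t • x ∈ C)
    {x y : E} (hx : x ∈ C) (hy : y ∈ C) : x + y ∈ C := by
  have h := hcone 2 two_pos _ (hC hx hy (by norm_num : (0 : ℝ) ≤ 1 / 2)
    (by norm_num : (0 : ℝ) ≤ 1 / 2) (by norm_num))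
  rwa [show (2 : ℝ) • ((1 / 2 : ℝ) • x + (1 / 2 : ℝ) • y) = x + y by module] at h

lemma ConcaveOn.add_le_map_add (hF : ConcaveOn ℝ C F)
    (hhom : ∀ t : ℝ, 0 < t → ∀ x ∈ C, F (t • x) = t * F x) {x y : E} (hx : x ∈ C)
    (hy : y ∈ C) : F x + F y ≤ F (x + y) := by
  have hmid : (1 / 2 : ℝ) • x + (1 / 2 : ℝ) • y ∈ C :=
    hF.1 hx hy (by norm_num) (by norm_num) (by norm_num)
  have hconc := hF.2 hx hy (by norm_num : (0 : ℝ) ≤ 1 / 2) (by norm_num : (0 : ℝ) ≤ 1 / 2)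
    (by norm_num)
  have hdouble : (2 : ℝ) • ((1 / 2 : ℝ) • x + (1 / 2 : ℝ) • y) = x + y := by module
  have h2 := hhom 2 two_pos _ hmid
  rw [hdouble] at h2
  simp only [smul_eq_mul] at hconc
  linarith

lemma ConcaveOn.map_le_of_hasDerivAt (hF : ConcaveOn ℝ C F)
    (hC : ∀ t : ℝ, 0 < t → ∀ x ∈ C, t • x ∈ C)
    (hhom : ∀ t : ℝ, 0 < t → ∀ x ∈ C, F (t • x) = t * F x) (hx : x ∈ C) (hv : v ∈ C)
    (hd : HasDerivAt (fun t : ℝ => F (x + t • v)) d 0) : F v ≤ d := by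
  have hsum := hF.add_le_map_add hhom hx hv
  have htangent := hF.map_add_smul_sub_le_of_hasDerivAt one_pos hx
    (by simpa using hF.1.add_mem_of_smul_mem hC hx hv) hd
  simp only [one_smul, one_mul] at htangent
  linarith

end ConcaveLine

section Ray

variable {E : Type*} [AddCommGroup E] [Module ℝ E] [TopologicalSpace E]
  [IsTopologicalAddGroup E] [ContinuousSMul ℝ E]

lemma mem_closure_of_forall_add_smul_mem {Γ : Set E} (hcone : ∀ t : ℝ, 0 < t → ∀ x ∈ Γ, t • x ∈ Γ)
    {α γ : E} (hray : ∀ t : ℝ, 0 < t → α + t • γ ∈ Γ) : γ ∈ closure Γ := by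
  have hlim : Tendsto (fun ε : ℝ => ε • α + γ) (𝓝[>] 0) (𝓝 γ) := by
    have := ((continuous_id.smul continuous_const).add continuous_const).tendsto (0 : ℝ)
      (f := fun ε : ℝ => ε • α + γ)
    simpa using this.mono_left nhdsWithin_le_nhds
  refine mem_closure_of_tendsto hlim (eventually_nhdsWithin_of_forall fun ε (hε : 0 < ε) => ?_)
  have h := hcone ε hε _ (hray ε⁻¹ (inv_pos.2 hε))
  rwa [smul_add, smul_smul, mul_inv_cancel₀ hε.ne', one_smul] at h

lemma add_smul_mem_of_le_map_add_smul {Γ : Set E} {F : E → ℝ} {α γ : E}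
    (hopen : IsOpen {t : ℝ | α + t • γ ∈ Γ}) (hcont : ContinuousOn F (closure Γ))
    (hbd : ∀ M ∈ closure Γ \ Γ, F M = 0) (hα : α ∈ Γ) (hpos : 0 < F α)
    (hmono : ∀ t : ℝ, 0 < t → α + t • γ ∈ Γ → F α ≤ F (α + t • γ)) :
    ∀ t : ℝ, 0 < t → α + t • γ ∈ Γ := by
  set S := {t : ℝ | α + t • γ ∈ Γ}
  have hpath : Continuous fun t : ℝ => α + t • γ := by fun_prop
  have hS0 : (Ioi 0 ∩ S).Nonempty := by
    have h0 : S ∈ 𝓝 (0 : ℝ) := hopen.mem_nhds (by simpa [S] using hα)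
    exact ((eventually_mem_nhdsWithin (a := (0 : ℝ)) (s := Ioi 0)).and
      (mem_nhdsWithin_of_mem_nhds h0)).exists
  -- At a limit point of the ray in `(0, ∞)`, continuity keeps `F ≥ F α > 0`, so it is not on `∂Γ`.
  have hclosed : closure S ∩ Ioi 0 ⊆ S := by
    rintro t ⟨htS, ht⟩
    have ht' : t ∈ closure (Ioi 0 ∩ S) := isOpen_Ioi.inter_closure ⟨ht, htS⟩
    have hmaps : MapsTo (fun t : ℝ => α + t • γ) (Ioi 0 ∩ S) (closure Γ) :=
      fun s hs => subset_closure hs.2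
    have hp : α + t • γ ∈ closure Γ :=
      (show MapsTo (fun s : ℝ => α + s • γ) S Γ from fun _ hs => hs).closure hpath htS
    have hle : F α ≤ F (α + t • γ) :=
      ContinuousWithinAt.closure_le ht' continuousWithinAt_const
        ((hcont _ hp).comp (f := fun s : ℝ => α + s • γ) hpath.continuousWithinAt hmaps)
        fun s hs => hmono s hs.1 hs.2
    by_contra hnot
    linarith [hbd _ ⟨hp, hnot⟩]
  exact fun t ht => isPreconnected_Ioi.subset_of_closure_inter_subset hopen hS0 hclosed ht

end Ray

lemma isOpen_setOf_add_smul_mem {n : Type*} {Γ : Set (Matrix n n ℝ)}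
    (hopen : IsOpen {M : {A : Matrix n n ℝ // A.IsSymm} | (M : Matrix n n ℝ) ∈ Γ})
    {α γ : Matrix n n ℝ} (hα : α.IsSymm) (hγ : γ.IsSymm) :
    IsOpen {t : ℝ | α + t • γ ∈ Γ} := by
  have hpath : Continuous fun t : ℝ => (⟨α + t • γ, hα.add (hγ.smul t)⟩ : {A // A.IsSymm}) := by
    fun_prop
  exact hpath.isOpen_preimage _ hopen

theorem stmt_14_general (d : ℕ) (Γ : Set (Matrix (Fin d) (Fin d) ℝ))
    (hne : Γ.Nonempty) (hsym : ∀ M ∈ Γ, M.IsSymm)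
    (hopen : IsOpen {M : {A : Matrix (Fin d) (Fin d) ℝ // A.IsSymm} |
      (M : Matrix (Fin d) (Fin d) ℝ) ∈ Γ})
    (hcone : ∀ t : ℝ, 0 < t → ∀ M ∈ Γ, t • M ∈ Γ)
    (F : Matrix (Fin d) (Fin d) ℝ → ℝ)
    (hcont : ContinuousOn F (closure Γ))
    (hconc : ConcaveOn ℝ (closure Γ) F)
    (hhom : ∀ t : ℝ, 0 < t → ∀ M ∈ closure Γ, F (t • M) = t * F M)
    (DF : Matrix (Fin d) (Fin d) ℝ → Matrix (Fin d) (Fin d) ℝ → ℝ)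
    (hDF : ∀ α ∈ Γ, ∀ γ : Matrix (Fin d) (Fin d) ℝ,
      HasDerivAt (fun t : ℝ => F (α + t • γ)) (DF α γ) 0)
    (hbd : ∀ M ∈ closure Γ \ Γ, F M = 0)
    (hpos : ∀ M ∈ Γ, 0 < F M) :
    closure Γ = {γ : Matrix (Fin d) (Fin d) ℝ | γ.IsSymm ∧ ∀ α ∈ Γ, 0 ≤ DF α γ} := by
  have hcone_closure : ∀ t : ℝ, 0 < t → ∀ M ∈ closure Γ, t • M ∈ closure Γ := fun t ht =>
    (show MapsTo (t • ·) Γ Γ from hcone t ht).closure (continuous_const_smul t)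
  ext γ
  constructor
  · intro hγ
    refine ⟨closure_minimal hsym (isClosed_eq (by fun_prop) continuous_id) hγ, fun α hα => ?_⟩
    have hFγ : 0 ≤ F γ := by
      by_cases hγΓ : γ ∈ Γ
      · exact (hpos γ hγΓ).le
      · exact (hbd γ ⟨hγ, hγΓ⟩).ge
    exact hFγ.trans (hconc.map_le_of_hasDerivAt hcone_closure hhom (subset_closure hα) hγ
      (hDF α hα γ))
  · rintro ⟨hγsym, hDFγ⟩
    obtain ⟨α, hα⟩ := hne
    refine mem_closure_of_forall_add_smul_mem hcone (add_smul_mem_of_le_map_add_smul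
      (isOpen_setOf_add_smul_mem hopen (hsym α hα) hγsym) hcont hbd hα (hpos α hα) ?_)
    intro t ht hαt
    have h := hconc.le_map_sub_map_sub_smul_of_hasDerivAt ht (subset_closure hαt)
      (by simpa using subset_closure hα) (hDF _ hαt γ)
    rw [add_sub_cancel_right] at h
    linarith [mul_nonneg ht.le (hDFγ _ hαt)]

theorem stmt_14 (d : ℕ) (Γ : Set (Matrix (Fin d) (Fin d) ℝ))
    (hne : Γ.Nonempty) (hsym : ∀ M ∈ Γ, M.IsSymm)
    (hopen : IsOpen {M : {A : Matrix (Fin d) (Fin d) ℝ // A.IsSymm} |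
      (M : Matrix (Fin d) (Fin d) ℝ) ∈ Γ})
    (hconv : Convex ℝ Γ) (hcone : ∀ t : ℝ, 0 < t → ∀ M ∈ Γ, t • M ∈ Γ)
    (F : Matrix (Fin d) (Fin d) ℝ → ℝ)
    (hcont : ContinuousOn F (closure Γ))
    (hconc : ConcaveOn ℝ (closure Γ) F)
    (hhom : ∀ t : ℝ, 0 < t → ∀ M ∈ closure Γ, F (t • M) = t * F M)
    (DF : Matrix (Fin d) (Fin d) ℝ → Matrix (Fin d) (Fin d) ℝ → ℝ)
    (hDF : ∀ α ∈ Γ, ∀ γ : Matrix (Fin d) (Fin d) ℝ,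
      HasDerivAt (fun t : ℝ => F (α + t • γ)) (DF α γ) 0)
    (hbd : ∀ M ∈ closure Γ \ Γ, F M = 0)
    (hpos : ∀ M ∈ Γ, 0 < F M) :
    closure Γ = {γ : Matrix (Fin d) (Fin d) ℝ | γ.IsSymm ∧ ∀ α ∈ Γ, 0 ≤ DF α γ} :=
  stmt_14_general d Γ hne hsym hopen hcone F hcont hconc hhom DF hDF hbd hpos
end

section
/- For 0 < ε < 1, the function u(x₁,x₂) = |x₁|^{2−ε} on the unit disk in ℝ² is convex, satisfies det(D²u) = 0 almost everywhere, belongs to C^{1,1−ε} but not to C^{1,1} on the disk. -/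
/-!
The function `u` depends on `x 0` only, through `φ t = |t| ^ (r + 1)` with `r = 1 - ε`. Its
gradient is `φ' (x 0) • proj 0`, where `φ' t = (r + 1) * (|t| ^ (r - 1) * t)` is an odd signed
power: it is `r`-Hölder, but its difference quotient at `0` grows like `t ^ (r - 1) → ∞`.
Convexity of `u` is that of `φ`, and the Hessian has a zero column.
-/

open Set Filter Topology
open scoped NNReal

theorem abs_rpow_sub_rpow_le {r s t : ℝ} (hr0 : 0 ≤ r) (hr1 : r ≤ 1) (hs : 0 ≤ s)
    (ht : 0 ≤ t) :
    |s ^ r - t ^ r| ≤ |s - t| ^ r := by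
  wlog hts : t ≤ s generalizing s t
  · rw [abs_sub_comm, abs_sub_comm s]
    exact this ht hs (le_of_not_ge hts)
  have hsub := Real.rpow_add_le_add_rpow (sub_nonneg.2 hts) ht hr0 hr1
  rw [sub_add_cancel] at hsub
  rw [abs_of_nonneg (sub_nonneg.2 (Real.rpow_le_rpow ht hts hr0)),
    abs_of_nonneg (sub_nonneg.2 hts)]
  linarith

theorem abs_rpow_sub_one_mul_self_of_nonneg {r t : ℝ} (hr : 0 < r) (ht : 0 ≤ t) :
    |t| ^ (r - 1) * t = t ^ r := by
  rcases ht.eq_or_lt with rfl | ht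
  · simp [Real.zero_rpow hr.ne']
  · rw [abs_of_pos ht, Real.rpow_sub_one ht.ne', div_mul_cancel₀ _ ht.ne']

theorem abs_rpow_sub_one_mul_self_of_nonpos {r t : ℝ} (hr : 0 < r) (ht : t ≤ 0) :
    |t| ^ (r - 1) * t = -(-t) ^ r := by
  rw [← abs_rpow_sub_one_mul_self_of_nonneg hr (neg_nonneg.2 ht), abs_neg, mul_neg, neg_neg]

theorem HolderWith.of_dist_le {X Y : Type*} [PseudoMetricSpace X] [PseudoMetricSpace Y]
    {C r : ℝ≥0} {f : X → Y} (h : ∀ x y, dist (f x) (f y) ≤ C * dist x y ^ (r : ℝ)) :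
    HolderWith C r f := fun x y => by
  rw [edist_dist, edist_dist, ENNReal.ofReal_rpow_of_nonneg dist_nonneg r.coe_nonneg,
    ← ENNReal.ofReal_coe_nnreal, ← ENNReal.ofReal_mul C.coe_nonneg]
  exact ENNReal.ofReal_le_ofReal (h x y)

theorem holderWith_abs_rpow_sub_one_mul_self {r : ℝ≥0} (hr0 : 0 < r) (hr1 : r ≤ 1) :
    HolderWith 2 r fun t : ℝ => |t| ^ ((r : ℝ) - 1) * t := by
  have hr0' : (0 : ℝ) < r := hr0
  have hr1' : (r : ℝ) ≤ 1 := hr1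
  have hmixed : ∀ s t : ℝ, 0 ≤ s → t ≤ 0 →
      |s ^ (r : ℝ) + (-t) ^ (r : ℝ)| ≤ 2 * |s - t| ^ (r : ℝ) := by
    intro s t hs ht
    have h1 := Real.rpow_le_rpow hs (by linarith : s ≤ s - t) hr0'.le
    have h2 := Real.rpow_le_rpow (neg_nonneg.2 ht) (by linarith : -t ≤ s - t) hr0'.le
    rw [abs_of_nonneg (add_nonneg (Real.rpow_nonneg hs _) (Real.rpow_nonneg (neg_nonneg.2 ht) _)),
      abs_of_nonneg (by linarith)]
    linarith
  refine HolderWith.of_dist_le fun s t => ?_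
  simp only [Real.dist_eq, NNReal.coe_ofNat]
  have hpos : 0 ≤ |s - t| ^ (r : ℝ) := by positivity
  rcases le_total 0 s with hs | hs <;> rcases le_total 0 t with ht | ht
  · rw [abs_rpow_sub_one_mul_self_of_nonneg hr0' hs, abs_rpow_sub_one_mul_self_of_nonneg hr0' ht]
    linarith [abs_rpow_sub_rpow_le hr0'.le hr1' hs ht]
  · rw [abs_rpow_sub_one_mul_self_of_nonneg hr0' hs, abs_rpow_sub_one_mul_self_of_nonpos hr0' ht,
      sub_neg_eq_add]
    exact hmixed s t hs ht
  · rw [abs_rpow_sub_one_mul_self_of_nonpos hr0' hs, abs_rpow_sub_one_mul_self_of_nonneg hr0' ht,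
      ← abs_neg, neg_sub', neg_neg, sub_neg_eq_add, add_comm, abs_sub_comm s]
    exact hmixed t s ht hs
  · rw [abs_rpow_sub_one_mul_self_of_nonpos hr0' hs, abs_rpow_sub_one_mul_self_of_nonpos hr0' ht,
      neg_sub_neg]
    have h := abs_rpow_sub_rpow_le hr0'.le hr1' (neg_nonneg.2 ht) (neg_nonneg.2 hs)
    rw [neg_sub_neg] at h
    linarith

theorem not_lipschitzOnWith_abs_rpow_sub_one_mul_self {r c : ℝ} (hr0 : 0 < r) (hr1 : r < 1)
    (hc : 0 < c) {s : Set ℝ} (hs : s ∈ 𝓝 0) (K : ℝ≥0) :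
    ¬ LipschitzOnWith K (fun t => c * (|t| ^ (r - 1) * t)) s := by
  intro hK
  have hblowup := (tendsto_rpow_neg_nhdsGT_zero (by linarith : r - 1 < 0)).eventually_gt_atTop
    (K / c)
  have hmem : ∀ᶠ t in 𝓝[>] 0, t ∈ s := mem_nhdsWithin_of_mem_nhds hs
  obtain ⟨t, ht_big, ht_mem, ht_pos⟩ := (hblowup.and (hmem.and self_mem_nhdsWithin)).exists
  have hle := hK.dist_le_mul t ht_mem 0 (mem_of_mem_nhds hs)
  simp only [mul_zero, Real.dist_eq, sub_zero,
    abs_rpow_sub_one_mul_self_of_nonneg hr0 ht_pos.le] at hle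
  rw [abs_of_pos (by positivity), abs_of_pos ht_pos] at hle
  rw [div_lt_iff₀ hc] at ht_big
  have : c * t ^ r = (t ^ (r - 1) * c) * t := by
    rw [mul_comm _ c, mul_assoc, ← Real.rpow_add_one ht_pos.ne', sub_add_cancel]
  nlinarith

theorem hasDerivAt_abs_rpow_add_one {r : ℝ} (hr : 0 < r) (t : ℝ) :
    HasDerivAt (fun t : ℝ => |t| ^ (r + 1)) ((r + 1) * (|t| ^ (r - 1) * t)) t := by
  convert hasDerivAt_abs_rpow t (by linarith : 1 < r + 1) using 1
  ring_nf

theorem convexOn_abs_rpow {p : ℝ} (hp : 1 ≤ p) : ConvexOn ℝ univ fun t : ℝ => |t| ^ p := by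
  refine ⟨convex_univ, fun s _ t _ a b ha hb hab => ?_⟩
  have htri : |a • s + b • t| ≤ a • |s| + b • |t| := by
    simpa [abs_mul, abs_of_nonneg ha, abs_of_nonneg hb] using abs_add_le (a * s) (b * t)
  calc |a • s + b • t| ^ p ≤ (a • |s| + b • |t|) ^ p :=
        Real.rpow_le_rpow (abs_nonneg _) htri (by linarith)
    _ ≤ a • |s| ^ p + b • |t| ^ p :=
        (convexOn_rpow hp).2 (abs_nonneg s) (abs_nonneg t) ha hb hab

theorem HolderWith.smul_clm_comp {E : Type*} [NormedAddCommGroup E] [NormedSpace ℝ E]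
    (ℓ : StrongDual ℝ E) {g : ℝ → ℝ} {C r : ℝ≥0} (hg : HolderWith C r g) :
    ∃ C', HolderWith C' r fun x => g (ℓ x) • ℓ := by
  have hsmul := (ContinuousLinearMap.toSpanSingleton ℝ ℓ).lipschitz.holderWith
  have := hsmul.comp (hg.comp ℓ.lipschitz.holderWith)
  rw [mul_one, one_mul] at this
  exact ⟨_, this⟩

theorem LipschitzOnWith.of_smul_proj {ι : Type*} [Fintype ι] [DecidableEq ι] {i : ι}
    {g : ℝ → ℝ} {K : ℝ≥0} {R : ℝ}
    (h : LipschitzOnWith K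
      (fun x : EuclideanSpace ℝ ι => g (x i) • EuclideanSpace.proj (𝕜 := ℝ) i)
      (Metric.ball 0 R)) :
    LipschitzOnWith K g (Ioo (-R) R) := by
  have hmem : ∀ t ∈ Ioo (-R) R,
      EuclideanSpace.single i t ∈ Metric.ball (0 : EuclideanSpace ℝ ι) R :=
    fun t ht => by simpa [PiLp.norm_single, abs_lt] using ht
  refine LipschitzOnWith.of_dist_le_mul fun s hs t ht => ?_
  have hdist := h.dist_le_mul _ (hmem s hs) _ (hmem t ht)
  rw [PiLp.dist_single_same] at hdist
  refine le_trans ?_ hdist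
  have hproj : 1 ≤ ‖EuclideanSpace.proj (𝕜 := ℝ) (ι := ι) i‖ := by
    simpa using (EuclideanSpace.proj (𝕜 := ℝ) i).le_opNorm (EuclideanSpace.single i 1)
  simpa [dist_eq_norm, ← sub_smul, norm_smul] using le_mul_of_one_le_right (abs_nonneg _) hproj

open Matrix MeasureTheory

theorem stmt_17 (ε : ℝ) (hε0 : 0 < ε) (hε1 : ε < 1)
    (u : EuclideanSpace ℝ (Fin 2) → ℝ)
    (hu : ∀ x : EuclideanSpace ℝ (Fin 2), u x = |x 0| ^ ((2 : ℝ) - ε)) :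
    ConvexOn ℝ (Metric.ball (0 : EuclideanSpace ℝ (Fin 2)) 1) u ∧
    (∀ᵐ x : EuclideanSpace ℝ (Fin 2), x ∈ Metric.ball (0 : EuclideanSpace ℝ (Fin 2)) 1 →
      Matrix.det (Matrix.of fun i j : Fin 2 =>
        fderiv ℝ (fun y => fderiv ℝ u y (EuclideanSpace.single j 1)) x
          (EuclideanSpace.single i 1)) = 0) ∧
    (∀ x ∈ Metric.ball (0 : EuclideanSpace ℝ (Fin 2)) 1, DifferentiableAt ℝ u x) ∧
    (∃ C : NNReal, HolderOnWith C (Real.toNNReal (1 - ε)) (fderiv ℝ u)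
      (Metric.ball (0 : EuclideanSpace ℝ (Fin 2)) 1)) ∧
    ¬ ∃ K : NNReal,
      LipschitzOnWith K (fderiv ℝ u) (Metric.ball (0 : EuclideanSpace ℝ (Fin 2)) 1) := by
  set r := Real.toNNReal (1 - ε)
  have hr : (r : ℝ) = 1 - ε := Real.coe_toNNReal _ (by linarith)
  have hr0 : (0 : ℝ) < r := by linarith
  have hu' : u = (fun t : ℝ => |t| ^ ((r : ℝ) + 1)) ∘ EuclideanSpace.proj 0 :=
    funext fun x => by rw [hu, Function.comp_apply, hr]; congr 1; ring
  set g : ℝ → ℝ := fun t => ((r : ℝ) + 1) * (|t| ^ ((r : ℝ) - 1) * t)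
  have hderiv : ∀ x, HasFDerivAt u (g (x 0) • EuclideanSpace.proj (𝕜 := ℝ) 0) x := by
    intro x
    rw [hu']
    exact (hasDerivAt_abs_rpow_add_one hr0 (x 0)).comp_hasFDerivAt x
      (ContinuousLinearMap.hasFDerivAt _)
  have hfderiv : fderiv ℝ u = fun x => g (x 0) • EuclideanSpace.proj (𝕜 := ℝ) 0 :=
    funext fun x => (hderiv x).fderiv
  refine ⟨?_, ?_, fun x _ => (hderiv x).differentiableAt, ?_, ?_⟩
  · rw [hu']
    exact ((convexOn_abs_rpow (by linarith)).comp_linearMap _).subset (subset_univ _)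
      (convex_ball _ _)
  · -- `u` does not depend on `x 1`, so the second column of the Hessian vanishes.
    refine Eventually.of_forall fun x _ => det_eq_zero_of_column_eq_zero 1 fun i => ?_
    have hcol : (fun y => fderiv ℝ u y (EuclideanSpace.single 1 1)) = fun _ => 0 := by
      simp [hfderiv]
    simp [hcol]
  · have hg : HolderWith (2 * ‖(r : ℝ) + 1‖₊) r g :=
      (holderWith_abs_rpow_sub_one_mul_self (by exact_mod_cast hr0)
        (Real.toNNReal_le_one.2 (by linarith))).smul _
    obtain ⟨C, hC⟩ := hg.smul_clm_comp (EuclideanSpace.proj (𝕜 := ℝ) (ι := Fin 2) 0)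
    exact ⟨C, hfderiv ▸ hC.holderOnWith _⟩
  · rintro ⟨K, hK⟩
    rw [hfderiv] at hK
    exact not_lipschitzOnWith_abs_rpow_sub_one_mul_self hr0 (by linarith) (by linarith)
      (Ioo_mem_nhds (by norm_num : (-1 : ℝ) < 0) one_pos) K hK.of_smul_proj
end
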